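/- Anti-chain property for a concrete class: Let Π be any ground program whose rules are of the form h ← B, where h is an atom and B is a finite set of atoms together with at most one aggregate condition of the form |{t : p(t) ∈ S}| ⊙ n evaluated on the candidate set S (⊙ one of =, <, >, ≤, ≥, ≠). Define the aggregate reduct of Π w.r.t. S by deleting rules whose aggregate condition fails in S and replacing the aggregate condition in remaining rules by the set of atoms {p(t) : p(t) ∈ S}; S is an answer set iff S is the least model of the reduct. Then if A₁ and A₂ are both answer sets of Π and A₁ ⊆ A₂, then A₁ = A₂. -/

import Mathlib

/-- Models and least models of ground definite programs. -/
def IsModel {α : Type*} (P : Set (α × Set α)) (A : Set α) : Prop :=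
  ∀ r ∈ P, r.2 ⊆ A → r.1 ∈ A

def IsLeastModel {α : Type*} (P : Set (α × Set α)) (A : Set α) : Prop :=
  IsModel P A ∧ ∀ M : Set α, IsModel P M → A ⊆ M

/-- The six arithmetic relations. -/
inductive AggRel | eq | lt | gt | le | ge | ne

def AggRel.eval : AggRel → ℕ → ℕ → Prop
  | .eq, a, b => a = b
  | .lt, a, b => a < b
  | .gt, a, b => a > b
  | .le, a, b => a ≤ b
  | .ge, a, b => a ≥ b
  | .ne, a, b => a ≠ b

/-- A rule: head atom, finite set of body atoms, and at most one aggregate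
condition `|{t : p(t) ∈ S}| ⊙ n`. -/
structure ARule (τ α : Type*) where
  head : α
  body : Set α
  agg : Option (AggRel × ℕ)

/-- Aggregate reduct w.r.t. S: delete rules whose aggregate condition fails in S;
in surviving rules replace the condition by the atoms {p(t) : p(t) ∈ S}. -/
def reduct {τ α : Type*} (p : τ → α) (P : Set (ARule τ α)) (S : Set α) :
    Set (α × Set α) :=
  {r | ∃ q ∈ P,
    (q.agg = none ∧ r = (q.head, q.body)) ∨
    (∃ rel n, q.agg = some (rel, n) ∧ rel.eval (Set.ncard {t : τ | p t ∈ S}) n ∧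
      r = (q.head, q.body ∪ {a : α | ∃ t : τ, p t ∈ S ∧ a = p t}))}

def AnswerSet {τ α : Type*} (p : τ → α) (P : Set (ARule τ α)) (S : Set α) : Prop :=
  IsLeastModel (reduct p P S) S

/-! If `A₁ ⊆ A₂` are answer sets, `A₁` is a model of the reduct w.r.t. `A₂`: a reduct rule whose
body holds in `A₁` contains all `p`-atoms of `A₂` among its body atoms if it came from an aggregate,
so `A₁` and `A₂` evaluate that aggregate alike and the rule is also in the reduct w.r.t. `A₁`.
Minimality of `A₂` then gives `A₂ ⊆ A₁`. -/

theorem IsLeastModel.eq_of_isModel_of_subset {α : Type*} {P : Set (α × Set α)} {A M : Set α}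
    (hA : IsLeastModel P A) (hM : IsModel P M) (hMA : M ⊆ A) : M = A :=
  hMA.antisymm (hA.2 M hM)

section Reduct

variable {τ α : Type*} {p : τ → α} {P : Set (ARule τ α)} {A₁ A₂ : Set α}

theorem preimage_eq_of_aggAtoms_subset (hsub : A₁ ⊆ A₂)
    (hagg : {a : α | ∃ t : τ, p t ∈ A₂ ∧ a = p t} ⊆ A₁) : p ⁻¹' A₁ = p ⁻¹' A₂ :=
  (Set.preimage_mono hsub).antisymm fun t ht => hagg ⟨t, ht, rfl⟩

theorem mem_reduct_of_body_subset (hsub : A₁ ⊆ A₂) {r : α × Set α}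
    (hr : r ∈ reduct p P A₂) (hbody : r.2 ⊆ A₁) : r ∈ reduct p P A₁ := by
  obtain ⟨q, hq, ⟨hnone, rfl⟩ | ⟨rel, n, hsome, heval, rfl⟩⟩ := hr
  · exact ⟨q, hq, Or.inl ⟨hnone, rfl⟩⟩
  · have hpre : p ⁻¹' A₁ = p ⁻¹' A₂ :=
      preimage_eq_of_aggAtoms_subset hsub (Set.subset_union_right.trans hbody)
    have hpre' : ∀ t, p t ∈ A₁ ↔ p t ∈ A₂ := Set.ext_iff.mp hpre
    refine ⟨q, hq, Or.inr ⟨rel, n, hsome, ?_, ?_⟩⟩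
    · simpa only [Set.preimage, hpre'] using heval
    · simp only [hpre']

theorem isModel_reduct_of_subset (h₁ : AnswerSet p P A₁) (hsub : A₁ ⊆ A₂) :
    IsModel (reduct p P A₂) A₁ :=
  fun r hr hbody => h₁.1 r (mem_reduct_of_body_subset hsub hr hbody) hbody

end Reduct

theorem answer_sets_antichain_general {τ α : Type*} (p : τ → α) (P : Set (ARule τ α))
    (A₁ A₂ : Set α) (h₁ : AnswerSet p P A₁) (h₂ : AnswerSet p P A₂)
    (hsub : A₁ ⊆ A₂) : A₁ = A₂ :=
  h₂.eq_of_isModel_of_subset (isModel_reduct_of_subset h₁ hsub) hsub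

/-- Anti-chain property. -/
theorem answer_sets_antichain {τ α : Type*} (p : τ → α) (P : Set (ARule τ α))
    (hfin : ∀ q ∈ P, q.body.Finite)
    (A₁ A₂ : Set α) (h₁ : AnswerSet p P A₁) (h₂ : AnswerSet p P A₂)
    (hsub : A₁ ⊆ A₂) : A₁ = A₂ :=
  answer_sets_antichain_general p P A₁ A₂ h₁ h₂ hsub
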